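/- arXiv:2208.03314 — 6 statements merged into one kernel-verified Lean document; each statement's English description precedes it below -/
import Mathlib

section
/- The normalization constant G(N, J̄; x) = ∑ over states (n_i) summing to N of ∏_{j=1}^J (∏_{k=1}^{n_j} η_j/μ_j(k)) · ∏_{i=2}^J (η_i d_i(x))^{n_{ia}+n_{ib}} / (n_{ia}! n_{ib}!) equals ∑_{n=0}^N C_n(N, J̄) h(x)^n, where C_n(N, J̄) = (2^n/n!) ∑_{n_1+...+n_J = N−n} ∏_{j=1}^J ∏_{k=1}^{n_j} η_j/μ_j(k) and h(x) = ∑_{j=2}^J η_j d_j(x). -/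
/-! Fix the number `m` of customers on the lanes. Both lanes of warehouse `i` carry the weight
`η_i d_i`, so by the multinomial theorem in `2w` variables the lane factors sum to `(2h)^m / m!`;
what remains is the sum over the station occupancies with total `N - m`, i.e. `C_m h^m`. -/

open Finset

theorem Finset.Nat.sum_antidiagonalTuple_prod_pow_div_factorial {K : Type*} [Field K]
    [CharZero K] (m n : ℕ) (x : Fin m → K) :
    ∑ p ∈ Nat.antidiagonalTuple m n, ∏ i, x i ^ p i / ((p i).factorial : K) =
      (∑ i, x i) ^ n / (n.factorial : K) := by
  rw [← piAntidiag_univ_fin_eq_antidiagonalTuple, sum_pow_eq_sum_piAntidiag, sum_div]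
  refine sum_congr rfl fun p hp ↦ ?_
  have hspec : (∏ i, ((p i).factorial : K)) * (Nat.multinomial univ p : K) = n.factorial := by
    rw [← (mem_piAntidiag.1 hp).1]
    exact_mod_cast Nat.multinomial_spec univ p
  have hfact (k : ℕ) : (k.factorial : K) ≠ 0 := Nat.cast_ne_zero.2 k.factorial_ne_zero
  rw [prod_div_distrib, div_eq_div_iff (prod_ne_zero_iff.2 fun i _ ↦ hfact _) (hfact n)]
  linear_combination -(∏ i, x i ^ p i) * hspec

theorem Finset.Nat.sum_antidiagonalTuple_add {M : Type*} [AddCommMonoid M] (a b N : ℕ)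
    (F : (Fin (a + b) → ℕ) → M) :
    ∑ p ∈ Nat.antidiagonalTuple (a + b) N, F p =
      ∑ ij ∈ antidiagonal N, ∑ q ∈ Nat.antidiagonalTuple a ij.1,
        ∑ r ∈ Nat.antidiagonalTuple b ij.2, F (Fin.append q r) := by
  simp_rw [← sum_product' (f := fun q r ↦ F (Fin.append q r))]
  rw [← sum_sigma (antidiagonal N)
    (fun ij ↦ Nat.antidiagonalTuple a ij.1 ×ˢ Nat.antidiagonalTuple b ij.2)
    fun x ↦ F (Fin.append x.2.1 x.2.2)]
  refine sum_nbij' (fun p ↦ ⟨(∑ i, p (Fin.castAdd b i), ∑ i, p (Fin.natAdd a i)),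
      (fun i ↦ p (Fin.castAdd b i), fun i ↦ p (Fin.natAdd a i))⟩)
    (fun x ↦ Fin.append x.2.1 x.2.2) ?_ ?_ ?_ ?_ ?_
  · intro p hp
    simp_all [Nat.mem_antidiagonalTuple, ← Fin.sum_univ_add]
  · rintro ⟨ij, q, r⟩ h
    simp_all [Nat.mem_antidiagonalTuple, Fin.sum_univ_add]
  · intro p _
    exact Fin.append_castAdd_natAdd
  · rintro ⟨⟨i, j⟩, q, r⟩ h
    simp only [mem_sigma, HasAntidiagonal.mem_antidiagonal, mem_product,
      Nat.mem_antidiagonalTuple] at h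
    obtain ⟨-, rfl, rfl⟩ := h
    simp
  · intro p _
    rw [Fin.append_castAdd_natAdd]

theorem Finset.Nat.sum_antidiagonalTuple_add_self_prod_pow_div_factorial {K : Type*} [Field K]
    [CharZero K] (w m : ℕ) (x : Fin w → K) :
    ∑ r ∈ Nat.antidiagonalTuple (w + w) m,
        ∏ i, x i ^ (r (Fin.castAdd w i) + r (Fin.natAdd w i)) /
          (((r (Fin.castAdd w i)).factorial : K) * ((r (Fin.natAdd w i)).factorial : K)) =
      (2 * ∑ i, x i) ^ m / (m.factorial : K) := by
  have hsplit : ∀ r : Fin (w + w) → ℕ,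
      ∏ i, x i ^ (r (Fin.castAdd w i) + r (Fin.natAdd w i)) /
          (((r (Fin.castAdd w i)).factorial : K) * ((r (Fin.natAdd w i)).factorial : K)) =
        ∏ i, Fin.append x x i ^ r i / ((r i).factorial : K) := fun r ↦ by
    simp only [Fin.prod_univ_add, Fin.append_left, Fin.append_right, ← prod_mul_distrib,
      pow_add, div_mul_div_comm]
  simp_rw [hsplit, sum_antidiagonalTuple_prod_pow_div_factorial, Fin.sum_univ_add,
    Fin.append_left, Fin.append_right, two_mul]

/-- Stations are indexed by `Fin (w+1)` (`0` is the center, warehouse `i : Fin w`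
is station `i.succ`); the lanes `ia`, `ib` are the last `w + w` coordinates of
a state tuple. -/
theorem normalization_constant_polynomial_general (w N : ℕ) (η : Fin (w + 1) → ℝ)
    (μ : Fin (w + 1) → ℕ → ℝ) (d : Fin w → ℝ) :
    (∑ p ∈ Finset.Nat.antidiagonalTuple ((w + 1) + (w + w)) N,
      (∏ j : Fin (w + 1),
          ∏ k ∈ Finset.range (p (Fin.castAdd (w + w) j)), η j / μ j (k + 1)) *
        ∏ i : Fin w,
          (η i.succ * d i) ^
              (p (Fin.natAdd (w + 1) (Fin.castAdd w i)) +
                p (Fin.natAdd (w + 1) (Fin.natAdd w i))) /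
            ((Nat.factorial (p (Fin.natAdd (w + 1) (Fin.castAdd w i))) : ℝ) *
              (Nat.factorial (p (Fin.natAdd (w + 1) (Fin.natAdd w i))) : ℝ)))
      = ∑ n ∈ Finset.range (N + 1),
          (2 ^ n / (Nat.factorial n : ℝ) *
              ∑ q ∈ Finset.Nat.antidiagonalTuple (w + 1) (N - n),
                ∏ j : Fin (w + 1), ∏ k ∈ Finset.range (q j), η j / μ j (k + 1)) *
            (∑ i : Fin w, η i.succ * d i) ^ n := by
  rw [Nat.sum_antidiagonalTuple_add]
  simp only [Fin.append_left, Fin.append_right]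
  simp_rw [← sum_mul_sum, Nat.sum_antidiagonalTuple_add_self_prod_pow_div_factorial]
  rw [← Nat.sum_antidiagonal_swap, Nat.sum_antidiagonal_eq_sum_range_succ_mk]
  refine sum_congr rfl fun n _ ↦ ?_
  simp only [Prod.swap_prod_mk]
  ring

/-- The normalization constant of the star-like Gordon-Newell network with
lanes equals `∑_{n=0}^N C_n(N, J̄) h(x)^n`, where
`C_n(N, J̄) = (2^n/n!) ∑_{n_1+...+n_J = N−n} ∏_j ∏_{k=1}^{n_j} η_j/μ_j(k)`
and `h(x) = ∑_{j=2}^J η_j d_j(x)`.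
Stations are indexed by `Fin (w+1)` (`0` is the center, warehouse `i : Fin w`
is station `i.succ`); the lanes `ia`, `ib` are the last `w + w` coordinates of
a state tuple; states are tuples of nonnegative integers summing to `N`. -/
theorem normalization_constant_polynomial (w N : ℕ) (hw : 1 ≤ w)
    (η : Fin (w + 1) → ℝ) (hη : ∀ j, 0 < η j)
    (μ : Fin (w + 1) → ℕ → ℝ) (hμ : ∀ j k, 1 ≤ k → 0 < μ j k)
    (d : Fin w → ℝ) (hd : ∀ i, 0 ≤ d i) :
    (∑ p ∈ Finset.Nat.antidiagonalTuple ((w + 1) + (w + w)) N,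
      (∏ j : Fin (w + 1),
          ∏ k ∈ Finset.range (p (Fin.castAdd (w + w) j)), η j / μ j (k + 1)) *
        ∏ i : Fin w,
          (η i.succ * d i) ^
              (p (Fin.natAdd (w + 1) (Fin.castAdd w i)) +
                p (Fin.natAdd (w + 1) (Fin.natAdd w i))) /
            ((Nat.factorial (p (Fin.natAdd (w + 1) (Fin.castAdd w i))) : ℝ) *
              (Nat.factorial (p (Fin.natAdd (w + 1) (Fin.natAdd w i))) : ℝ)))
      = ∑ n ∈ Finset.range (N + 1),
          (2 ^ n / (Nat.factorial n : ℝ) *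
              ∑ q ∈ Finset.Nat.antidiagonalTuple (w + 1) (N - n),
                ∏ j : Fin (w + 1), ∏ k ∈ Finset.range (q j), η j / μ j (k + 1)) *
            (∑ i : Fin w, η i.succ * d i) ^ n :=
  normalization_constant_polynomial_general w N η μ d
end

section
/- Suppose the Gordon-Newell throughput TH(m) = G(m−1, J)/G(m, J) is nondecreasing in the population size m. Then for all k = 0,...,N−2 and n = 0,...,N−k−2, the inequality C_{n+k+1}(N, J̄) · C_k(N−1, J̄) ≥ C_{n+k+1}(N−1, J̄) · C_k(N, J̄) holds, where C_k(M, J̄) = G(M−k, J) · 2^k/k!. -/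
/-! The factors `2 ^ k / k!` cancel, and the claim becomes `G i * G (j + 1) ≤ G j * G (i + 1)` for
`i = N - n - k - 2 ≤ j = N - k - 1`, i.e. `G i / G (i + 1) ≤ G j / G (j + 1)`: the inverse
throughput `G m / G (m + 1)` increases with `m`. -/

theorem monotone_div_succ_of_le_succ (G : ℕ → ℝ)
    (hTH : ∀ m, 1 ≤ m → G (m - 1) / G m ≤ G m / G (m + 1)) :
    Monotone fun m => G m / G (m + 1) :=
  monotone_nat_of_le_succ fun m => by simpa using hTH (m + 1) (by omega)

theorem mul_le_mul_of_monotone_div_succ {G : ℕ → ℝ} (hGpos : ∀ m, 0 < G m)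
    (hmono : Monotone fun m => G m / G (m + 1)) {i j : ℕ} (hij : i ≤ j) :
    G i * G (j + 1) ≤ G j * G (i + 1) :=
  (div_le_div_iff₀ (hGpos _) (hGpos _)).1 (hmono hij)

theorem coefficient_cross_inequality_general (G : ℕ → ℝ) (hGpos : ∀ m, 0 < G m)
    (hTH : ∀ m, 1 ≤ m → G (m - 1) / G m ≤ G m / G (m + 1))
    (C : ℕ → ℕ → ℝ)
    (hC : ∀ M k, C M k = G (M - k) * 2 ^ k / (Nat.factorial k : ℝ))
    (N k n : ℕ) (hn : n + k + 2 ≤ N) :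
    C N (n + k + 1) * C (N - 1) k ≥ C (N - 1) (n + k + 1) * C N k := by
  have key : G (N - 1 - (n + k + 1)) * G (N - k) ≤ G (N - 1 - k) * G (N - (n + k + 1)) := by
    have h := mul_le_mul_of_monotone_div_succ hGpos (monotone_div_succ_of_le_succ G hTH)
      (i := N - 1 - (n + k + 1)) (j := N - 1 - k) (by omega)
    rwa [show N - 1 - k + 1 = N - k by omega,
      show N - 1 - (n + k + 1) + 1 = N - (n + k + 1) by omega] at h
  have hw : (0 : ℝ) ≤ 2 ^ (n + k + 1) / (n + k + 1).factorial * (2 ^ k / k.factorial) := by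
    positivity
  rw [ge_iff_le, hC, hC, hC, hC]
  linear_combination mul_le_mul_of_nonneg_right key hw

/-- Lemma "ungleichung": if the throughput `TH m = G(m−1)/G m` is nondecreasing
in the population size `m ≥ 1`, then for all `k = 0,…,N−2`, `n = 0,…,N−k−2`,
`C_{n+k+1}(N) C_k(N−1) ≥ C_{n+k+1}(N−1) C_k(N)` where
`C_k(M) = G(M−k) · 2^k / k!`. -/
theorem coefficient_cross_inequality (G : ℕ → ℝ) (hGpos : ∀ m, 0 < G m)
    (hTH : ∀ m, 1 ≤ m → G (m - 1) / G m ≤ G m / G (m + 1))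
    (C : ℕ → ℕ → ℝ)
    (hC : ∀ M k, C M k = G (M - k) * 2 ^ k / (Nat.factorial k : ℝ))
    (N k n : ℕ) (hN : 2 ≤ N) (hk : k + 2 ≤ N) (hn : n + k + 2 ≤ N) :
    C N (n + k + 1) * C (N - 1) k ≥ C (N - 1) (n + k + 1) * C N k :=
  coefficient_cross_inequality_general G hGpos hTH C hC N k n hn
end

section
/- Let C_0,...,C_N and D_0,...,D_{N−1} be positive reals satisfying C_{n+k+1} D_k ≥ C_k D_{n+k+1} for all k = 0,...,N−2 and n = 0,...,N−k−2 (where D_m := C'_m with C'_m = C_m(N−1)). If 0 ≤ h* < h, then (∑_{n=0}^{N−1} D_n (h*)^n)(∑_{k=0}^N C_k h^k) > (∑_{n=0}^{N−1} D_n h^n)(∑_{k=0}^N C_k (h*)^k). Equivalently, the ratio (∑_{n=0}^{N−1} D_n h^n)/(∑_{k=0}^N C_k h^k) is strictly decreasing in h on [0, ∞). -/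
/-!
Write `P(x) = ∑_{n<N} D_n xⁿ` and `Q(x) = ∑_{k≤N} C_k xᵏ`, and let `Q₀` be `Q` without its top
term. By the Binet–Cauchy identity, `P(h*) Q₀(h) - P(h) Q₀(h*)` is half the sum over pairs
`i, j < N` of `(D_i C_j - D_j C_i)(h*ⁱ hʲ - h*ʲ hⁱ)`. The cross-product condition makes the first
factor nonnegative for `i ≤ j`, and `h* < h` does the same for the second, so every product is
nonnegative. The top term `C_N x^N` contributes `C_N (P(h*) h^N - P(h) h*^N)`, which is strictly
positive because of the constant term of `P`.
-/

open Finset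

section BinetCauchy

variable {ι R : Type*}

theorem two_mul_sum_mul_sum_sub_sum_mul_sum [CommRing R] (s : Finset ι) (a b u v : ι → R) :
    2 * ((∑ i ∈ s, a i * u i) * (∑ j ∈ s, b j * v j)
        - (∑ i ∈ s, a i * v i) * (∑ j ∈ s, b j * u j))
      = ∑ i ∈ s, ∑ j ∈ s, (a i * b j - a j * b i) * (u i * v j - u j * v i) := by
  have expand : ∀ i j, (a i * b j - a j * b i) * (u i * v j - u j * v i)
      = (a i * u i) * (b j * v j) - (a i * v i) * (b j * u j)
        + ((a j * u j) * (b i * v i) - (a j * v j) * (b i * u i)) := fun i j => by ring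
  simp_rw [expand, sum_add_distrib, sum_sub_distrib]
  rw [sum_comm (f := fun i j => a j * u j * (b i * v i)),
    sum_comm (f := fun i j => a j * v j * (b i * u i)), ← sum_mul_sum, ← sum_mul_sum]
  ring

theorem sum_mul_sum_le_sum_mul_sum_of_cross_le [LinearOrder ι] [CommRing R] [LinearOrder R]
    [IsStrictOrderedRing R] {s : Finset ι} {a b u v : ι → R}
    (hab : ∀ i ∈ s, ∀ j ∈ s, i ≤ j → a j * b i ≤ a i * b j)
    (huv : ∀ i ∈ s, ∀ j ∈ s, i ≤ j → u j * v i ≤ u i * v j) :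
    (∑ i ∈ s, a i * v i) * (∑ j ∈ s, b j * u j)
      ≤ (∑ i ∈ s, a i * u i) * (∑ j ∈ s, b j * v j) := by
  suffices 0 ≤ 2 * ((∑ i ∈ s, a i * u i) * (∑ j ∈ s, b j * v j)
      - (∑ i ∈ s, a i * v i) * (∑ j ∈ s, b j * u j)) by linarith
  rw [two_mul_sum_mul_sum_sub_sum_mul_sum]
  refine sum_nonneg fun i hi => sum_nonneg fun j hj => ?_
  rcases le_total i j with hij | hji
  · exact mul_nonneg (sub_nonneg.2 (hab i hi j hj hij)) (sub_nonneg.2 (huv i hi j hj hij))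
  · exact mul_nonneg_of_nonpos_of_nonpos (sub_nonpos.2 (hab j hj i hi hji))
      (sub_nonpos.2 (huv j hj i hi hji))

end BinetCauchy

section Powers

variable {R : Type*} [CommSemiring R] [PartialOrder R]

theorem pow_mul_pow_le_pow_mul_pow [IsOrderedRing R] {x y : R} (hx : 0 ≤ x) (hxy : x ≤ y) {m n : ℕ}
    (hmn : m ≤ n) : x ^ n * y ^ m ≤ x ^ m * y ^ n := by
  obtain ⟨d, rfl⟩ := Nat.exists_eq_add_of_le hmn
  calc x ^ (m + d) * y ^ m = (x * y) ^ m * x ^ d := by ring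
    _ ≤ (x * y) ^ m * y ^ d :=
      mul_le_mul_of_nonneg_left (pow_le_pow_left₀ hx hxy d)
        (pow_nonneg (mul_nonneg hx (hx.trans hxy)) m)
    _ = x ^ m * y ^ (m + d) := by ring

theorem sum_range_mul_pow_pos [IsStrictOrderedRing R] {c : ℕ → R} {n : ℕ} (hn : 0 < n) (hc0 : 0 < c 0)
    (hc : ∀ k < n, 0 ≤ c k) {x : R} (hx : 0 ≤ x) : 0 < ∑ k ∈ range n, c k * x ^ k :=
  sum_pos' (fun k hk => mul_nonneg (hc k (mem_range.1 hk)) (pow_nonneg hx k))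
    ⟨0, mem_range.2 hn, by simpa using hc0⟩

end Powers

theorem sum_range_mul_pow_mul_pow_lt {D : ℕ → ℝ} {N : ℕ} (hN : 0 < N) (hD : ∀ n < N, 0 < D n)
    {x y : ℝ} (hx : 0 ≤ x) (hxy : x < y) :
    (∑ n ∈ range N, D n * y ^ n) * x ^ N < (∑ n ∈ range N, D n * x ^ n) * y ^ N := by
  rw [sum_mul, sum_mul]
  refine sum_lt_sum (fun n hn => ?_) ⟨0, mem_range.2 hN, ?_⟩
  · have hn := mem_range.1 hn
    calc D n * y ^ n * x ^ N = D n * (x ^ N * y ^ n) := by ring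
      _ ≤ D n * (x ^ n * y ^ N) :=
        mul_le_mul_of_nonneg_left (pow_mul_pow_le_pow_mul_pow hx hxy.le hn.le) (hD n hn).le
      _ = D n * x ^ n * y ^ N := by ring
  · simpa using mul_lt_mul_of_pos_left (pow_lt_pow_left₀ hxy hx hN.ne') (hD 0 hN)

/-- Core polynomial inequality for Theorem 1: positive coefficients `C_k`
(`k ≤ N`) and `D_n` (`n ≤ N−1`) satisfying the cross-product condition
`C_{n+k+1} D_k ≥ C_k D_{n+k+1}` imply, for `0 ≤ h* < h`,
`(∑_{n<N} D_n (h*)^n)(∑_{k≤N} C_k h^k) > (∑_{n<N} D_n h^n)(∑_{k≤N} C_k (h*)^k)`,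
i.e. the ratio `(∑ D_n h^n)/(∑ C_k h^k)` is strictly decreasing in `h ≥ 0`. -/
theorem polynomial_ratio_decreasing (N : ℕ) (hN : 1 ≤ N)
    (C D : ℕ → ℝ) (hC : ∀ k, k ≤ N → 0 < C k) (hD : ∀ n, n ≤ N - 1 → 0 < D n)
    (hcross : ∀ k n, k + 2 ≤ N → n + k + 2 ≤ N →
      C (n + k + 1) * D k ≥ C k * D (n + k + 1))
    (h hs : ℝ) (hhs : 0 ≤ hs) (hlt : hs < h) :
    ((∑ n ∈ Finset.range N, D n * hs ^ n) * (∑ k ∈ Finset.range (N + 1), C k * h ^ k)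
        > (∑ n ∈ Finset.range N, D n * h ^ n) * (∑ k ∈ Finset.range (N + 1), C k * hs ^ k))
    ∧ (∑ n ∈ Finset.range N, D n * h ^ n) / (∑ k ∈ Finset.range (N + 1), C k * h ^ k)
        < (∑ n ∈ Finset.range N, D n * hs ^ n) / (∑ k ∈ Finset.range (N + 1), C k * hs ^ k) := by
  have hD' : ∀ n < N, 0 < D n := fun n hn => hD n (by omega)
  have hDC : ∀ i ∈ range N, ∀ j ∈ range N, i ≤ j → D j * C i ≤ D i * C j := by
    intro i _ j hj hij
    rcases hij.eq_or_lt with rfl | hij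
    · exact le_rfl
    · have hjN := mem_range.1 hj
      have := hcross i (j - i - 1) (by omega) (by omega)
      rw [show j - i - 1 + i + 1 = j by omega] at this
      linarith
  have hpow : ∀ i ∈ range N, ∀ j ∈ range N, i ≤ j → hs ^ j * h ^ i ≤ hs ^ i * h ^ j :=
    fun i _ j _ hij => pow_mul_pow_le_pow_mul_pow hhs hlt.le hij
  have lower := sum_mul_sum_le_sum_mul_sum_of_cross_le hDC hpow
  have top := sum_range_mul_pow_mul_pow_lt (by omega) hD' hhs hlt
  have hCN := hC N le_rfl
  have main : (∑ n ∈ range N, D n * h ^ n) * (∑ k ∈ range (N + 1), C k * hs ^ k)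
      < (∑ n ∈ range N, D n * hs ^ n) * (∑ k ∈ range (N + 1), C k * h ^ k) := by
    rw [sum_range_succ, sum_range_succ]
    nlinarith
  have hQ : ∀ x : ℝ, 0 ≤ x → 0 < ∑ k ∈ range (N + 1), C k * x ^ k := fun x hx =>
    sum_range_mul_pow_pos N.succ_pos (hC 0 N.zero_le) (fun k hk => (hC k (by omega)).le) hx
  exact ⟨main, (div_lt_div_iff₀ (hQ h (hhs.trans hlt.le)) (hQ hs hhs)).2 main⟩
end

section
/- If x* minimizes h(x) = ∑_{j=2}^J ρ_j d_j(x) over x ∈ ℝ², and the throughput satisfies TH(N; x) = P(h(x))/Q(h(x)) where P(h) = ∑_{n=0}^{N−1} C_n(N−1) h^n and Q(h) = ∑_{k=0}^N C_k(N) h^k with positive coefficients satisfying C_{n+k+1}(N) C_k(N−1) ≥ C_{n+k+1}(N−1) C_k(N) for all k = 0,...,N−2, n = 0,...,N−k−2, then x* maximizes TH(N; x) over ℝ². -/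
/-!
With `a = h(x*) ≤ b = h(x)`, the claim is that `P/Q` is nonincreasing on `[0, ∞)`. Extending the
coefficients of `P` by `C_N(N-1) := 0`, the cross condition says that the coefficient ratio
`C_n(N-1) / C_n(N)` is nonincreasing in `n`. Then
`2 (P(a) Q(b) - P(b) Q(a)) = ∑_{i,j} (p_i q_j - p_j q_i) (a^i b^j - a^j b^i)`,
and in each term both factors have the sign of `j - i`.
-/

open Finset

theorem pow_mul_pow_le_pow_mul_pow_of_le {R : Type*} [CommSemiring R] [PartialOrder R]
    [IsOrderedRing R] {a b : R} (ha : 0 ≤ a) (hab : a ≤ b) {m n : ℕ} (hmn : m ≤ n) :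
    a ^ n * b ^ m ≤ a ^ m * b ^ n := by
  obtain ⟨k, rfl⟩ := Nat.exists_eq_add_of_le hmn
  have hb : 0 ≤ b := ha.trans hab
  calc a ^ (m + k) * b ^ m = a ^ m * (a ^ k * b ^ m) := by ring
    _ ≤ a ^ m * (b ^ k * b ^ m) := by gcongr
    _ = a ^ m * b ^ (m + k) := by ring

namespace Finset

variable {ι R : Type*} [CommRing R]

theorem two_mul_sub_sum_mul_sum (s : Finset ι) (f g u v : ι → R) :
    2 * ((∑ i ∈ s, f i * u i) * (∑ j ∈ s, g j * v j) -
        (∑ i ∈ s, f i * v i) * (∑ j ∈ s, g j * u j)) =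
      ∑ i ∈ s, ∑ j ∈ s, (f i * g j - f j * g i) * (u i * v j - u j * v i) := by
  have hswap := sum_comm (s := s) (t := s)
    (f := fun i j => f i * u i * (g j * v j) - f i * v i * (g j * u j))
  simp only [sum_mul_sum, ← sum_sub_distrib, two_mul]
  nth_rewrite 2 [hswap]
  simp only [← sum_add_distrib]
  refine sum_congr rfl fun i _ => sum_congr rfl fun j _ => ?_
  ring

variable [LinearOrder R] [IsStrictOrderedRing R]

theorem sum_mul_sum_le_sum_mul_sum_of_nonneg {s : Finset ι} {f g u v : ι → R}
    (h : ∀ i ∈ s, ∀ j ∈ s, 0 ≤ (f i * g j - f j * g i) * (u i * v j - u j * v i)) :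
    (∑ i ∈ s, f i * v i) * (∑ j ∈ s, g j * u j) ≤
      (∑ i ∈ s, f i * u i) * (∑ j ∈ s, g j * v j) := by
  have h2 : 0 ≤ 2 * ((∑ i ∈ s, f i * u i) * (∑ j ∈ s, g j * v j) -
      (∑ i ∈ s, f i * v i) * (∑ j ∈ s, g j * u j)) :=
    two_mul_sub_sum_mul_sum s f g u v ▸ sum_nonneg fun i hi => sum_nonneg fun j hj => h i hi j hj
  exact sub_nonneg.mp ((mul_nonneg_iff_of_pos_left two_pos).mp h2)

theorem sum_mul_pow_mul_sum_mul_pow_le {s : Finset ℕ} {f g : ℕ → R}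
    (hfg : ∀ i ∈ s, ∀ j ∈ s, i ≤ j → f j * g i ≤ f i * g j)
    {a b : R} (ha : 0 ≤ a) (hab : a ≤ b) :
    (∑ i ∈ s, f i * b ^ i) * (∑ j ∈ s, g j * a ^ j) ≤
      (∑ i ∈ s, f i * a ^ i) * (∑ j ∈ s, g j * b ^ j) := by
  refine sum_mul_sum_le_sum_mul_sum_of_nonneg fun i hi j hj => ?_
  rcases le_total i j with hij | hji
  · exact mul_nonneg (sub_nonneg.mpr (hfg i hi j hj hij))
      (sub_nonneg.mpr (pow_mul_pow_le_pow_mul_pow_of_le ha hab hij))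
  · exact mul_nonneg_of_nonpos_of_nonpos (sub_nonpos.mpr (hfg j hj i hi hji))
      (sub_nonpos.mpr (pow_mul_pow_le_pow_mul_pow_of_le ha hab hji))

end Finset

section Coefficients

variable {R : Type*} [CommSemiring R] [PartialOrder R] {N : ℕ} {C D : ℕ → R}

theorem ratio_antitone_of_cross
    (hcross : ∀ k n, k + 2 ≤ N → n + k + 2 ≤ N →
      C (n + k + 1) * D k ≥ D (n + k + 1) * C k)
    {i j : ℕ} (hij : i ≤ j) (hj : j < N) : D j * C i ≤ D i * C j := by
  obtain rfl | hlt := hij.eq_or_lt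
  · exact le_rfl
  · have h := hcross i (j - i - 1) (by omega) (by omega)
    rw [show j - i - 1 + i + 1 = j by omega] at h
    exact h.trans_eq (mul_comm _ _)

theorem truncated_ratio_antitone_of_cross [IsOrderedRing R] (hC : ∀ k, k ≤ N → 0 ≤ C k)
    (hD : ∀ n, n < N → 0 ≤ D n)
    (hcross : ∀ k n, k + 2 ≤ N → n + k + 2 ≤ N →
      C (n + k + 1) * D k ≥ D (n + k + 1) * C k) :
    ∀ i ∈ range (N + 1), ∀ j ∈ range (N + 1), i ≤ j →
      (if j < N then D j else 0) * C i ≤ (if i < N then D i else 0) * C j := by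
  intro i _ j hj hij
  rw [mem_range] at hj
  split_ifs with hjN hiN hiN
  · exact ratio_antitone_of_cross hcross hij hjN
  · omega
  · rw [zero_mul]
    exact mul_nonneg (hD i hiN) (hC j (by omega))
  · rw [zero_mul, zero_mul]

end Coefficients

theorem weber_solution_maximizes_throughput_general (m N : ℕ)
    (ρ : Fin m → ℝ) (hρ : ∀ j, 0 < ρ j)
    (d : Fin m → (ℝ × ℝ) → ℝ) (hd : ∀ j x, 0 ≤ d j x)
    (C : ℕ → ℕ → ℝ)
    (hCpos : ∀ k, k ≤ N → 0 < C N k)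
    (hDpos : ∀ n, n ≤ N - 1 → 0 < C (N - 1) n)
    (hcross : ∀ k n, k + 2 ≤ N → n + k + 2 ≤ N →
      C N (n + k + 1) * C (N - 1) k ≥ C (N - 1) (n + k + 1) * C N k)
    (TH : (ℝ × ℝ) → ℝ)
    (hTH : ∀ x, TH x =
      (∑ n ∈ Finset.range N, C (N - 1) n * (∑ j : Fin m, ρ j * d j x) ^ n) /
        (∑ k ∈ Finset.range (N + 1), C N k * (∑ j : Fin m, ρ j * d j x) ^ k))
    (xs : ℝ × ℝ)
    (hxs : ∀ x : ℝ × ℝ, ∑ j : Fin m, ρ j * d j xs ≤ ∑ j : Fin m, ρ j * d j x) :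
    ∀ x : ℝ × ℝ, TH x ≤ TH xs := by
  intro x
  have ha : 0 ≤ ∑ j : Fin m, ρ j * d j xs :=
    sum_nonneg fun j _ => mul_nonneg (hρ j).le (hd j xs)
  have hb := ha.trans (hxs x)
  have hQ : ∀ t : ℝ, 0 ≤ t → 0 < ∑ k ∈ range (N + 1), C N k * t ^ k := fun t ht =>
    sum_pos' (fun k hk => mul_nonneg (hCpos k (by simpa [Nat.lt_succ_iff] using hk)).le
      (pow_nonneg ht k))
      ⟨0, by simp, by simpa using hCpos 0 (Nat.zero_le N)⟩
  have hP : ∀ t : ℝ, ∑ n ∈ range N, C (N - 1) n * t ^ n =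
      ∑ n ∈ range (N + 1), (if n < N then C (N - 1) n else 0) * t ^ n := fun t => by
    rw [sum_range_succ, if_neg (lt_irrefl N), zero_mul, add_zero]
    exact sum_congr rfl fun n hn => by rw [if_pos (mem_range.mp hn)]
  rw [hTH x, hTH xs, div_le_div_iff₀ (hQ _ hb) (hQ _ ha), hP, hP]
  exact sum_mul_pow_mul_sum_mul_pow_le
    (truncated_ratio_antitone_of_cross (fun k hk => (hCpos k hk).le)
      (fun n hn => (hDpos n (by omega)).le) hcross) ha (hxs x)

/-- Theorem 1 (optimal location): if `x*` minimizes the weighted Weber objective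
`h(x) = ∑_j ρ_j d_j(x)` over the plane, and the throughput has the product-form
representation `TH(N; x) = P(h(x))/Q(h(x))` with positive coefficients
satisfying the cross-product inequality, then `x*` maximizes `TH(N; ·)`. -/
theorem weber_solution_maximizes_throughput (m N : ℕ) (hm : 1 ≤ m) (hN : 1 ≤ N)
    (ρ : Fin m → ℝ) (hρ : ∀ j, 0 < ρ j) (hρsum : ∑ j : Fin m, ρ j = 1)
    (d : Fin m → (ℝ × ℝ) → ℝ) (hd : ∀ j x, 0 ≤ d j x)
    (hconv : ∀ j, ConvexOn ℝ Set.univ (d j))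
    (C : ℕ → ℕ → ℝ)
    (hCpos : ∀ k, k ≤ N → 0 < C N k)
    (hDpos : ∀ n, n ≤ N - 1 → 0 < C (N - 1) n)
    (hcross : ∀ k n, k + 2 ≤ N → n + k + 2 ≤ N →
      C N (n + k + 1) * C (N - 1) k ≥ C (N - 1) (n + k + 1) * C N k)
    (TH : (ℝ × ℝ) → ℝ)
    (hTH : ∀ x, TH x =
      (∑ n ∈ Finset.range N, C (N - 1) n * (∑ j : Fin m, ρ j * d j x) ^ n) /
        (∑ k ∈ Finset.range (N + 1), C N k * (∑ j : Fin m, ρ j * d j x) ^ k))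
    (xs : ℝ × ℝ)
    (hxs : ∀ x : ℝ × ℝ, ∑ j : Fin m, ρ j * d j xs ≤ ∑ j : Fin m, ρ j * d j x) :
    ∀ x : ℝ × ℝ, TH x ≤ TH xs :=
  weber_solution_maximizes_throughput_general m N ρ hρ d hd C hCpos hDpos hcross TH hTH xs hxs
end

section
/- In a two-station cyclic closed network with constant rates, i.e. G(m) = ∑_{k=0}^m a^k b^{m−k} for positive reals a, b, the throughput TH(m) = G(m−1)/G(m) is nondecreasing in m ≥ 1. -/
open Finset

/-! `G(m) = h_m(a, b)`, the complete homogeneous symmetric polynomial of degree `m`. Both ways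
of splitting off an extreme term give `h_{m+1} = x^{m+1} + y h_m = y^{m+1} + x h_m`, and combining
them yields the Turán-type identity `h_{m+1}^2 - h_m h_{m+2} = (xy)^{m+1}`. For positive `x, y`
this makes `h` log-concave, which is the monotonicity of the ratio `h_{m-1} / h_m`. -/

section CompleteHomogeneous₂

variable {R : Type*}

def completeHomogeneous₂ [CommSemiring R] (x y : R) (m : ℕ) : R :=
  ∑ k ∈ range (m + 1), x ^ k * y ^ (m - k)

section CommRing

variable [CommRing R] (x y : R) (m : ℕ)

theorem completeHomogeneous₂_zero : completeHomogeneous₂ x y 0 = 1 := by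
  simp [completeHomogeneous₂]

theorem completeHomogeneous₂_comm : completeHomogeneous₂ x y m = completeHomogeneous₂ y x m := by
  simpa [completeHomogeneous₂] using geom_sum₂_comm x y (m + 1)

theorem completeHomogeneous₂_succ :
    completeHomogeneous₂ x y (m + 1) = x ^ (m + 1) + y * completeHomogeneous₂ x y m := by
  simpa [completeHomogeneous₂] using geom_sum₂_succ_eq x y (n := m + 1)

theorem completeHomogeneous₂_succ' :
    completeHomogeneous₂ x y (m + 1) = y ^ (m + 1) + x * completeHomogeneous₂ x y m := by
  rw [completeHomogeneous₂_comm, completeHomogeneous₂_succ, completeHomogeneous₂_comm]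

theorem completeHomogeneous₂_sq_sub_mul :
    completeHomogeneous₂ x y (m + 1) ^ 2
      - completeHomogeneous₂ x y m * completeHomogeneous₂ x y (m + 2) = (x * y) ^ (m + 1) := by
  linear_combination completeHomogeneous₂ x y (m + 1) * completeHomogeneous₂_succ x y m
    + x ^ (m + 1) * completeHomogeneous₂_succ' x y m
    - completeHomogeneous₂ x y m * completeHomogeneous₂_succ x y (m + 1)

end CommRing

section Ordered

variable [Field R] [LinearOrder R] [IsStrictOrderedRing R] {x y : R}

theorem completeHomogeneous₂_pos (hx : 0 < x) (hy : 0 ≤ y) (m : ℕ) :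
    0 < completeHomogeneous₂ x y m := by
  induction m with
  | zero => simp [completeHomogeneous₂_zero]
  | succ m ih => rw [completeHomogeneous₂_succ]; positivity

theorem completeHomogeneous₂_div_succ_le (hx : 0 < x) (hy : 0 ≤ y) (m : ℕ) :
    completeHomogeneous₂ x y m / completeHomogeneous₂ x y (m + 1)
      ≤ completeHomogeneous₂ x y (m + 1) / completeHomogeneous₂ x y (m + 2) := by
  rw [div_le_div_iff₀ (completeHomogeneous₂_pos hx hy _) (completeHomogeneous₂_pos hx hy _)]
  have := completeHomogeneous₂_sq_sub_mul x y m
  nlinarith [pow_nonneg (mul_nonneg hx.le hy) (m + 1)]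

end Ordered

end CompleteHomogeneous₂

/-- Two-station cyclic closed network with constant rates:
`G(m) = ∑_{k=0}^m a^k b^{m−k}` with `a, b > 0` has nondecreasing throughput
`TH(m) = G(m−1)/G(m)` for `m ≥ 1`. -/
theorem two_station_throughput_monotone (a b : ℝ) (ha : 0 < a) (hb : 0 < b)
    (G : ℕ → ℝ)
    (hG : ∀ m, G m = ∑ k ∈ Finset.range (m + 1), a ^ k * b ^ (m - k)) :
    ∀ m, 1 ≤ m → G (m - 1) / G m ≤ G m / G (m + 1) := by
  obtain rfl : G = completeHomogeneous₂ a b := funext hG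
  intro m hm
  obtain ⟨n, rfl⟩ := Nat.exists_eq_add_of_le' hm
  exact completeHomogeneous₂_div_succ_le ha hb.le n
end

section
/- For a single-server bottleneck: if G(m) = ∑_{k=0}^m r^k B(m−k) where r = η_1/μ_1 and B(ℓ) = ∑_{n_2+...+n_J = ℓ} ∏_{j=2}^J ∏_{i=1}^{n_j} η_j/(i μ_j) (all other stations infinite servers), then TH(m) = G(m−1)/G(m) → 1/r = μ_1/η_1 as m → ∞, i.e. the asymptotic throughput is bounded by the bottleneck service rate. -/
open Finset Filter Nat

/-
Substituting `i = m - k` gives `G m = r ^ m * ∑_{i ≤ m} (s / r) ^ i / i!`, a partial sum of the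
exponential series at `s / r`. Hence `G (m - 1) / G m` is `1 / r` times a ratio of two consecutive
partial sums, both of which converge to `exp (s / r) ≠ 0`.
-/

theorem sum_range_pow_mul_pow_div_factorial_sub {K : Type*} [Field K] {r : K} (hr : r ≠ 0)
    (s : K) (m : ℕ) :
    ∑ k ∈ range (m + 1), r ^ k * s ^ (m - k) / ((m - k)! : K) =
      r ^ m * ∑ i ∈ range (m + 1), (s / r) ^ i / (i ! : K) := by
  rw [← sum_range_reflect, mul_sum]
  refine sum_congr rfl fun i hi => ?_
  have him : i ≤ m := Nat.lt_succ_iff.mp (mem_range.mp hi)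
  rw [show m + 1 - 1 - i = m - i by omega, Nat.sub_sub_self him, pow_sub₀ r hr him, div_pow]
  field_simp

theorem Real.tendsto_sum_range_pow_div_factorial (x : ℝ) :
    Tendsto (fun n => ∑ i ∈ range n, x ^ i / (i ! : ℝ)) atTop (nhds (Real.exp x)) := by
  rw [Real.exp_eq_exp_ℝ]
  exact (NormedSpace.expSeries_div_hasSum_exp x).tendsto_sum_nat

theorem Filter.Tendsto.div_succ_self {𝕜 : Type*} [NormedField 𝕜] {u : ℕ → 𝕜} {L : 𝕜}
    (hu : Tendsto u atTop (nhds L)) (hL : L ≠ 0) :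
    Tendsto (fun n => u n / u (n + 1)) atTop (nhds 1) := by
  have h := hu.div (hu.comp (tendsto_add_atTop_nat 1)) hL
  rwa [div_self hL] at h

theorem bottleneck_throughput_limit_general (r s : ℝ) (hr : 0 < r)
    (G : ℕ → ℝ)
    (hG : ∀ m, G m = ∑ k ∈ Finset.range (m + 1),
      r ^ k * s ^ (m - k) / (Nat.factorial (m - k) : ℝ)) :
    Tendsto (fun m : ℕ => G (m - 1) / G m) atTop (nhds (1 / r)) := by
  set E : ℕ → ℝ := fun n => ∑ i ∈ range n, (s / r) ^ i / (i ! : ℝ)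
  have hGE : ∀ m, G m = r ^ m * E (m + 1) := fun m =>
    (hG m).trans (sum_range_pow_mul_pow_div_factorial_sub hr.ne' s m)
  have hE : Tendsto (fun n => E (n + 1) / E (n + 1 + 1)) atTop (nhds 1) :=
    ((Real.tendsto_sum_range_pow_div_factorial (s / r)).comp
      (tendsto_add_atTop_nat 1)).div_succ_self (Real.exp_pos _).ne'
  have hsucc : Tendsto (fun m => G m / G (m + 1)) atTop (nhds (1 / r)) := by
    have h := (tendsto_const_nhds (x := 1 / r)).mul hE
    rw [mul_one] at h
    refine h.congr fun m => ?_
    rw [hGE, hGE, pow_succ, mul_right_comm, mul_assoc,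
      mul_div_mul_left _ _ (pow_ne_zero m hr.ne')]
    ring
  refine (hsucc.comp (tendsto_sub_atTop_nat 1)).congr' ?_
  filter_upwards [eventually_ge_atTop 1] with m hm
  simp only [Function.comp_apply, Nat.sub_add_cancel hm]

/-- Bottleneck bound: for a single-server station (rate ratio `r = η_1/μ_1`)
fed by infinite servers (`s = ∑_{j≥2} η_j/μ_j`), the normalization constant is
`G(m) = ∑_{k=0}^m r^k s^{m−k}/(m−k)!` and the throughput
`TH(m) = G(m−1)/G(m)` converges to `1/r = μ_1/η_1` as `m → ∞`. -/
theorem bottleneck_throughput_limit (r s : ℝ) (hr : 0 < r) (hs : 0 < s)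
    (G : ℕ → ℝ)
    (hG : ∀ m, G m = ∑ k ∈ Finset.range (m + 1),
      r ^ k * s ^ (m - k) / (Nat.factorial (m - k) : ℝ)) :
    Tendsto (fun m : ℕ => G (m - 1) / G m) atTop (nhds (1 / r)) :=
  bottleneck_throughput_limit_general r s hr G hG
end
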